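/- With the scale-dependent coefficient norm N_R(P) (the case R⃗ = (R,…,R) of N_{R⃗}), for any real polynomial P in D variables and any integer s ≥ 1, the set of integers {k : N_{2^k}(P) = 2^s} is an interval in ℤ (i.e., if it contains k and h with k ≤ h, it contains every k' with k ≤ k' ≤ h). -/
import Mathlib


open Finset

/-- Distance from a real number to the nearest integer. -/
noncomputable def torusNorm (x : ℝ) : ℝ := |x - (round x : ℤ)|

/-- `NProp Γ lam R s` : the defining property of the scale-dependent coefficient norm,
namely either `s ≥ 1` and there is an integer `1 ≤ Q ≤ 2^s` with
`Σ_α ‖Q λ_α‖_𝕋 · R⃗^α ≤ 2^s`, or `s ≤ 0` and `Σ_α ‖λ_α‖_𝕋 · R⃗^α ≤ 2^s`.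
Then `N_{R⃗}(P) = 2^{s₀}` where `s₀` is the least `s` with this property. -/
def NProp {D : ℕ} (Γ : Finset (Fin D → ℕ)) (lam : (Fin D → ℕ) → ℝ)
    (R : Fin D → ℝ) (s : ℤ) : Prop :=
  (1 ≤ s ∧ ∃ Q : ℕ, 1 ≤ Q ∧ (Q : ℝ) ≤ (2 : ℝ) ^ s ∧
      ∑ α ∈ Γ, torusNorm ((Q : ℝ) * lam α) * ∏ i, R i ^ (α i) ≤ (2 : ℝ) ^ s)
  ∨ (s ≤ 0 ∧ ∑ α ∈ Γ, torusNorm (lam α) * ∏ i, R i ^ (α i) ≤ (2 : ℝ) ^ s)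


lemma NProp_mono {D : ℕ} (Γ : Finset (Fin D → ℕ)) (lam : (Fin D → ℕ) → ℝ)
    {R R' : Fin D → ℝ} (h0 : ∀ i, 0 ≤ R' i) (hle : ∀ i, R' i ≤ R i) {s : ℤ}
    (h : NProp Γ lam R s) : NProp Γ lam R' s := by
  have key : ∀ c : (Fin D → ℕ) → ℝ,
      ∑ α ∈ Γ, torusNorm (c α) * ∏ i, R' i ^ (α i)
        ≤ ∑ α ∈ Γ, torusNorm (c α) * ∏ i, R i ^ (α i) := by
    intro c
    apply Finset.sum_le_sum
    intro α _
    apply mul_le_mul_of_nonneg_left _ (abs_nonneg _)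
    apply Finset.prod_le_prod
    · intro i _; exact pow_nonneg (h0 i) _
    · intro i _; exact pow_le_pow_left₀ (h0 i) (hle i) _
  rcases h with ⟨hs, Q, hQ1, hQ2, hsum⟩ | ⟨hs, hsum⟩
  · exact Or.inl ⟨hs, Q, hQ1, hQ2, le_trans (key _) hsum⟩
  · exact Or.inr ⟨hs, le_trans (key _) hsum⟩

/-- Convexity: for `s ≥ 1`, the set of scales `k` with `N_{2^k}(P) = 2^s` is an interval. -/
theorem stmt_5 {D : ℕ} (Γ : Finset (Fin D → ℕ)) (lam : (Fin D → ℕ) → ℝ)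
    (s : ℤ) (hs : 1 ≤ s) (k k' h : ℕ) (h1 : k ≤ k') (h2 : k' ≤ h)
    (hk : IsLeast {s' : ℤ | NProp Γ lam (fun _ => (2 : ℝ) ^ k) s'} s)
    (hh : IsLeast {s' : ℤ | NProp Γ lam (fun _ => (2 : ℝ) ^ h) s'} s) :
    IsLeast {s' : ℤ | NProp Γ lam (fun _ => (2 : ℝ) ^ k') s'} s := by
  constructor
  · exact NProp_mono Γ lam (fun _ => pow_nonneg (by norm_num) _)
      (fun _ => pow_le_pow_right₀ (by norm_num) h2) hh.1
  · intro s' hs'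
    exact hk.2 (NProp_mono Γ lam (fun _ => pow_nonneg (by norm_num) _)
      (fun _ => pow_le_pow_right₀ (by norm_num) h1) hs')
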